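/- The double sum 2·∑_{j,k≥1} 1/(j^3 (j+k)^3) equals ζ(3)^2 − 3ζ(4)ζ(2) + 6·∑_{k≥1} H_k/k^5 − 3·∑_{n≥1} H_{n−1,4}/n^2. -/

import Mathlib

/-- The n-th harmonic number `H n = ∑_{j=1}^n 1/j`. -/
noncomputable def H (n : ℕ) : ℝ := ∑ j ∈ Finset.range n, 1 / (j + 1 : ℝ)

/-- Generalized harmonic number `H_{n,4} = ∑_{j=1}^n 1/j^4`. -/
noncomputable def H4 (n : ℕ) : ℝ := ∑ j ∈ Finset.range n, 1 / ((j + 1 : ℝ)) ^ 4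

/-- `ζ(r) = ∑_{n ≥ 1} 1/n^r`. -/
noncomputable def zetaR (r : ℕ) : ℝ := ∑' n : ℕ, 1 / ((n + 1 : ℝ)) ^ r

/-!
Group the double sum by the gap `k` between `j` and `j + k`. For fixed `k`, the partial
fraction expansion of `1 / (j ^ 3 (j + k) ^ 3)` turns the inner sum over `j` into telescoping
sums and tails of `ζ(2)`, which gives
`ζ(3,3) = ∑ H_{k,3} / k ^ 3 + 3 ∑ H_{k,2} / k ^ 4 - 6 ζ(2) ζ(4) + 6 ∑ H_k / k ^ 5`.
The first two sums are `ζ(3,3) + ζ(6)` and `ζ(4,2) + ζ(6)`, and the stuffle relations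
`ζ(a) ζ(b) = ζ(a,b) + ζ(b,a) + ζ(a + b)` for `(a, b) = (3, 3), (4, 2)` finish the computation.
-/

open Finset Filter Topology

section Series

variable {f g : ℕ → ℝ}

theorem hasSum_sub_nat_add_of_antitone (hf : Antitone f) (hf0 : Tendsto f atTop (𝓝 0))
    (k : ℕ) : HasSum (fun j => f j - f (j + k)) (∑ i ∈ range k, f i) := by
  rw [hasSum_iff_tendsto_nat_of_nonneg fun j => sub_nonneg.2 (hf (Nat.le_add_right j k))]
  have partial_sum : ∀ N, ∑ j ∈ range N, (f j - f (j + k))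
      = ∑ i ∈ range k, f i - ∑ i ∈ range k, f (N + i) := by
    intro N
    have h1 := sum_range_add f N k
    have h2 := sum_range_add f k N
    rw [add_comm k N] at h2
    simp only [sum_sub_distrib, add_comm _ k]
    linarith
  have tail : Tendsto (fun N => ∑ i ∈ range k, f (N + i)) atTop (𝓝 0) := by
    simpa using tendsto_finsetSum (range k) fun i _ => hf0.comp (tendsto_add_atTop_nat i)
  simpa [partial_sum] using tendsto_const_nhds.sub tail

/-- Telescoping `F (n + 1) G (n + 1) - F n G n = F n g n + f n G (n + 1)` for the partial sums
`F`, `G` of `f`, `g`. -/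
theorem hasSum_sum_range_mul_add_mul_sum_range {s t : ℝ} (hf0 : ∀ n, 0 ≤ f n)
    (hg0 : ∀ n, 0 ≤ g n) (hf : HasSum f s) (hg : HasSum g t) :
    HasSum (fun n => (∑ j ∈ range n, f j) * g n + f n * ∑ j ∈ range (n + 1), g j) (s * t) := by
  rw [hasSum_iff_tendsto_nat_of_nonneg fun n => add_nonneg
    (mul_nonneg (sum_nonneg fun j _ => hf0 j) (hg0 n))
    (mul_nonneg (hf0 n) (sum_nonneg fun j _ => hg0 j))]
  have partial_sum : ∀ N, ∑ n ∈ range N,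
      ((∑ j ∈ range n, f j) * g n + f n * ∑ j ∈ range (n + 1), g j)
        = (∑ j ∈ range N, f j) * ∑ j ∈ range N, g j := by
    intro N
    refine sum_range_induction _ (fun N => (∑ j ∈ range N, f j) * ∑ j ∈ range N, g j)
      (by simp) N fun n _ => ?_
    simp only [sum_range_succ]
    ring
  simpa only [partial_sum] using hf.tendsto_sum_nat.mul hg.tendsto_sum_nat

theorem hasSum_prod_of_hasSum_sum_range_mul {s : ℝ} (hf0 : ∀ n, 0 ≤ f n) (hg0 : ∀ n, 0 ≤ g n)
    (h : HasSum (fun n => (∑ j ∈ range n, f j) * g n) s) :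
    HasSum (fun p : ℕ × ℕ => f p.1 * g (p.1 + p.2 + 1)) s := by
  classical
  set W : ℕ × ℕ → ℝ := fun q => if q.2 < q.1 then f q.2 * g q.1 else 0 with hW
  have W_nonneg : 0 ≤ W := fun q => by
    by_cases hq : q.2 < q.1
    · simpa [hW, hq] using mul_nonneg (hf0 _) (hg0 _)
    · simp [hW, hq]
  have fiber : ∀ n, HasSum (fun j => W (n, j)) ((∑ j ∈ range n, f j) * g n) := by
    intro n
    have hfin : HasSum (fun j => W (n, j)) (∑ j ∈ range n, W (n, j)) :=
      hasSum_sum_of_ne_finset_zero fun j hj => if_neg (by simpa using hj)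
    rw [sum_mul]
    convert hfin using 1
    exact sum_congr rfl fun j hj => (if_pos (mem_range.1 hj)).symm
  have hWs : HasSum W s := by
    have hsum : Summable W := (summable_prod_of_nonneg W_nonneg).2
      ⟨fun n => (fiber n).summable, by simpa only [(fiber _).tsum_eq] using h.summable⟩
    exact (hsum.hasSum.prod_fiberwise fiber).unique h ▸ hsum.hasSum
  have hinj : Function.Injective fun p : ℕ × ℕ => (p.1 + p.2 + 1, p.1) := by
    rintro ⟨j, k⟩ ⟨j', k'⟩ hjk
    simp only [Prod.mk.injEq] at hjk
    ext <;> omega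
  have outside_range : ∀ q ∉ Set.range fun p : ℕ × ℕ => (p.1 + p.2 + 1, p.1), W q = 0 := by
    rintro ⟨n, j⟩ hq
    refine if_neg fun hjn => hq ⟨(j, n - j - 1), Prod.ext ?_ rfl⟩
    dsimp only
    omega
  convert (hinj.hasSum_iff outside_range).2 hWs using 1
  funext p
  exact (if_pos (by dsimp only; omega)).symm

end Series

theorem one_div_pow_three_mul_add_pow_three {K : Type*} [Field K] {x y : K} (hx : x ≠ 0)
    (hy : y ≠ 0) (hxy : x + y ≠ 0) :
    1 / (x ^ 3 * (x + y) ^ 3) = (1 / y) ^ 3 * (1 / x ^ 3 - 1 / (x + y) ^ 3)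
      - 3 * (1 / y) ^ 4 * (1 / x ^ 2 + 1 / (x + y) ^ 2)
      + 6 * (1 / y) ^ 5 * (1 / x - 1 / (x + y)) := by
  field_simp
  ring

section Zeta

noncomputable def zetaTerm (r n : ℕ) : ℝ := 1 / ((n : ℝ) + 1) ^ r

noncomputable def zetaPartial (r n : ℕ) : ℝ := ∑ j ∈ range n, zetaTerm r j

/-- The double zeta value `ζ(b, a) = ∑_{n > j ≥ 1} 1 / (j ^ a n ^ b)`, indexed by
`j = p.1 + 1` and `n = j + p.2 + 1`. -/
noncomputable def doubleZeta (a b : ℕ) : ℝ :=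
  ∑' p : ℕ × ℕ, zetaTerm a p.1 * zetaTerm b (p.1 + p.2 + 1)

variable {a b r : ℕ}

theorem zetaTerm_nonneg (r n : ℕ) : 0 ≤ zetaTerm r n := by
  unfold zetaTerm; positivity

theorem zetaTerm_antitone (r : ℕ) : Antitone (zetaTerm r) := fun m n hmn => by
  unfold zetaTerm
  gcongr

theorem tendsto_zetaTerm_atTop (hr : r ≠ 0) : Tendsto (zetaTerm r) atTop (𝓝 0) := by
  have h := (tendsto_one_div_add_atTop_nhds_zero_nat (𝕜 := ℝ)).pow r
  simp only [one_div_pow, zero_pow hr] at h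
  exact h

theorem zetaTerm_mul_zetaTerm (a b n : ℕ) : zetaTerm a n * zetaTerm b n = zetaTerm (a + b) n := by
  simp only [zetaTerm, pow_add, one_div_mul_one_div]

theorem zetaTerm_one_pow (r n : ℕ) : zetaTerm 1 n ^ r = zetaTerm r n := by
  simp only [zetaTerm, pow_one, one_div_pow]

theorem hasSum_zetaTerm (hr : 2 ≤ r) : HasSum (zetaTerm r) (zetaR r) := by
  have h := (summable_nat_add_iff 1).2 (Real.summable_one_div_nat_pow.2 (by omega : 1 < r))
  exact (h.congr fun n => by simp [zetaTerm]).hasSum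

theorem H_eq_zetaPartial (n : ℕ) : H n = zetaPartial 1 n := by
  simp only [H, zetaPartial, zetaTerm, pow_one]

theorem zetaPartial_le_zetaR (hr : 2 ≤ r) (n : ℕ) : zetaPartial r n ≤ zetaR r :=
  sum_le_hasSum _ (fun j _ => zetaTerm_nonneg r j) (hasSum_zetaTerm hr)

theorem hasSum_zetaTerm_sub_zetaTerm_add (hr : r ≠ 0) (k : ℕ) :
    HasSum (fun j => zetaTerm r j - zetaTerm r (j + k)) (zetaPartial r k) :=
  hasSum_sub_nat_add_of_antitone (zetaTerm_antitone r) (tendsto_zetaTerm_atTop hr) k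

theorem hasSum_zetaTerm_add (hr : 2 ≤ r) (k : ℕ) :
    HasSum (fun j => zetaTerm r (j + k)) (zetaR r - zetaPartial r k) :=
  (hasSum_nat_add_iff' k).2 (hasSum_zetaTerm hr)

theorem hasSum_zetaPartial_mul_zetaTerm (ha : 2 ≤ a) (hb : 2 ≤ b) :
    HasSum (fun n => zetaPartial a n * zetaTerm b n) (doubleZeta a b) := by
  have hsum : Summable fun n => zetaPartial a n * zetaTerm b n :=
    ((hasSum_zetaTerm hb).summable.mul_left (zetaR a)).of_nonneg_of_le
      (fun n => mul_nonneg (sum_nonneg fun j _ => zetaTerm_nonneg a j) (zetaTerm_nonneg b n))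
      fun n => mul_le_mul_of_nonneg_right (zetaPartial_le_zetaR ha n) (zetaTerm_nonneg b n)
  have hpairs := hasSum_prod_of_hasSum_sum_range_mul (zetaTerm_nonneg a) (zetaTerm_nonneg b)
    hsum.hasSum
  rw [doubleZeta, hpairs.tsum_eq]
  exact hsum.hasSum

theorem hasSum_doubleZeta (ha : 2 ≤ a) (hb : 2 ≤ b) :
    HasSum (fun p : ℕ × ℕ => zetaTerm a p.1 * zetaTerm b (p.1 + p.2 + 1)) (doubleZeta a b) :=
  hasSum_prod_of_hasSum_sum_range_mul (zetaTerm_nonneg a) (zetaTerm_nonneg b)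
    (hasSum_zetaPartial_mul_zetaTerm ha hb)

theorem hasSum_zetaTerm_mul_zetaPartial_succ (ha : 2 ≤ a) (hb : 2 ≤ b) :
    HasSum (fun n => zetaTerm a n * zetaPartial b (n + 1)) (doubleZeta b a + zetaR (a + b)) := by
  convert (hasSum_zetaPartial_mul_zetaTerm hb ha).add (hasSum_zetaTerm (by omega : 2 ≤ a + b))
    using 2 with n
  rw [zetaPartial, sum_range_succ, ← zetaTerm_mul_zetaTerm, ← zetaPartial]
  ring

theorem zetaR_mul_zetaR (ha : 2 ≤ a) (hb : 2 ≤ b) :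
    zetaR a * zetaR b = doubleZeta a b + (doubleZeta b a + zetaR (a + b)) :=
  (hasSum_sum_range_mul_add_mul_sum_range (zetaTerm_nonneg a) (zetaTerm_nonneg b)
    (hasSum_zetaTerm ha) (hasSum_zetaTerm hb)).unique
    ((hasSum_zetaPartial_mul_zetaTerm ha hb).add (hasSum_zetaTerm_mul_zetaPartial_succ ha hb))

theorem hasSum_zetaTerm_three_mul_zetaTerm_three_add (k : ℕ) :
    HasSum (fun j => zetaTerm 3 j * zetaTerm 3 (j + (k + 1)))
      (zetaTerm 3 k * zetaPartial 3 (k + 1)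
        - 3 * zetaTerm 4 k * (2 * zetaR 2 - zetaPartial 2 (k + 1))
        + 6 * zetaTerm 5 k * zetaPartial 1 (k + 1)) := by
  set c := zetaTerm 1 k
  have split : ∀ j, zetaTerm 3 j * zetaTerm 3 (j + (k + 1))
      = c ^ 3 * (zetaTerm 3 j - zetaTerm 3 (j + (k + 1)))
        - 3 * c ^ 4 * (zetaTerm 2 j + zetaTerm 2 (j + (k + 1)))
        + 6 * c ^ 5 * (zetaTerm 1 j - zetaTerm 1 (j + (k + 1))) := by
    intro j
    have hcast : ((j + (k + 1) : ℕ) : ℝ) + 1 = ((j : ℝ) + 1) + ((k : ℝ) + 1) := by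
      push_cast; ring
    simp only [c, zetaTerm, hcast, pow_one]
    rw [one_div_mul_one_div,
      one_div_pow_three_mul_add_pow_three (by positivity) (by positivity) (by positivity)]
  have hsum := (((hasSum_zetaTerm_sub_zetaTerm_add three_ne_zero (k + 1)).mul_left (c ^ 3)).sub
    (((hasSum_zetaTerm le_rfl).add (hasSum_zetaTerm_add le_rfl (k + 1))).mul_left (3 * c ^ 4))).add
    ((hasSum_zetaTerm_sub_zetaTerm_add one_ne_zero (k + 1)).mul_left (6 * c ^ 5))
  rw [← zetaTerm_one_pow 3, ← zetaTerm_one_pow 4, ← zetaTerm_one_pow 5,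
    two_mul, add_sub_assoc]
  exact hsum.congr_fun split

theorem six_mul_tsum_harmonic_div_pow_five :
    6 * ∑' k : ℕ, H (k + 1) / ((k + 1 : ℝ)) ^ 5
      = 6 * (zetaR 4 * zetaR 2) - 4 * zetaR 6 - 3 * doubleZeta 2 4 := by
  have h3 : 2 ≤ 3 := by norm_num
  have h4 : 2 ≤ 4 := by norm_num
  have rows := ((Equiv.prodComm ℕ ℕ).hasSum_iff.2 (hasSum_doubleZeta h3 h3)).prod_fiberwise
    hasSum_zetaTerm_three_mul_zetaTerm_three_add
  have diag33 := hasSum_zetaTerm_mul_zetaPartial_succ h3 h3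
  have diag42 := hasSum_zetaTerm_mul_zetaPartial_succ h4 le_rfl
  have hz := (hasSum_zetaTerm h4).mul_right (2 * zetaR 2)
  have hS : HasSum (fun k => 6 * (H (k + 1) / ((k + 1 : ℝ)) ^ 5)) _ :=
    (((rows.sub diag33).add (hz.mul_left 3)).sub (diag42.mul_left 3)).congr_fun fun k => by
      simp only [H_eq_zetaPartial, zetaTerm]
      ring
  rw [← tsum_mul_left, hS.tsum_eq]
  norm_num
  ring

end Zeta

/-- `2 ∑_{j,k≥1} 1/(j^3(j+k)^3)
  = ζ(3)^2 − 3ζ(4)ζ(2) + 6 ∑_{k≥1} H_k/k^5 − 3 ∑_{n≥1} H_{n−1,4}/n^2`. -/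
theorem stmt7 :
    2 * ∑' p : ℕ × ℕ, 1 / (((p.1 + 1 : ℝ)) ^ 3 * ((p.1 + 1 : ℝ) + (p.2 + 1 : ℝ)) ^ 3) =
      zetaR 3 ^ 2 - 3 * zetaR 4 * zetaR 2
        + 6 * ∑' k : ℕ, H (k + 1) / ((k + 1 : ℝ)) ^ 5
        - 3 * ∑' n : ℕ, H4 n / ((n + 1 : ℝ)) ^ 2 := by
  have lhs : ∑' p : ℕ × ℕ, 1 / (((p.1 + 1 : ℝ)) ^ 3 * ((p.1 + 1 : ℝ) + (p.2 + 1 : ℝ)) ^ 3)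
      = doubleZeta 3 3 :=
    tsum_congr fun p => by
      rw [zetaTerm, zetaTerm, one_div_mul_one_div]
      push_cast
      ring_nf
  have h42 : ∑' n : ℕ, H4 n / ((n + 1 : ℝ)) ^ 2 = doubleZeta 4 2 :=
    (tsum_congr fun n => (mul_one_div _ _).symm).trans
      (hasSum_zetaPartial_mul_zetaTerm (by norm_num) le_rfl).tsum_eq
  have s33 := zetaR_mul_zetaR (a := 3) (b := 3) (by norm_num) (by norm_num)
  have s42 := zetaR_mul_zetaR (a := 4) (b := 2) (by norm_num) le_rfl
  norm_num at s33 s42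
  rw [lhs, h42, six_mul_tsum_harmonic_div_pow_five]
  linarith
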